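/- Define B_H(σ²) = |σ² - 1|/√(2 - σ²) for σ² ∈ (0,2). For p_⋆ = N(μ, σ²) with σ² ∈ (0,2), D_H(p_⋆, p₂) = D_H(p_⋆, p₁) if and only if |μ| = B_H(σ²), D_H(p_⋆,p₂) > D_H(p_⋆,p₁) iff |μ| > B_H(σ²), and < iff <, where p₁ = N(μ,1), p₂ = N(0, μ² + σ²). -/

import Mathlib

/-!
The score `(log N(m, w))' y = (m - y) / w` of a Gaussian is affine, so the relative Fisher
divergence of `N(μ, v)` from `N(m, w)` is the second moment of an affine function under
`N(μ, v)`, namely `(1/w - 1/v)² v + ((μ - m) / w)²`. For the two competitors this gives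
`D_H(p⋆, p₂) - D_H(p⋆, p₁) = (2 - v) / (μ² + v) · (μ² - B_H(v)²)`, whose sign is that of
`|μ| - B_H(v)` because both are nonnegative.
-/

open MeasureTheory Real

/-- Density of a Normal distribution with mean `m` and variance `v`. -/
noncomputable def normalPDF (m v y : ℝ) : ℝ :=
  (Real.sqrt (2 * Real.pi * v))⁻¹ * Real.exp (-(y - m) ^ 2 / (2 * v))

/-- Relative Fisher information divergence between positive densities `p` and `q`. -/
noncomputable def relFisher (p q : ℝ → ℝ) : ℝ :=
  ∫ y : ℝ, (deriv (fun w => Real.log (p w)) y - deriv (fun w => Real.log (q w)) y) ^ 2 * p y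

/-- Boundary function `B_H(σ²) = |σ²-1|/√(2-σ²)` for `σ² ∈ (0,2)`. -/
noncomputable def BH (v : ℝ) : ℝ := |v - 1| / Real.sqrt (2 - v)

open ProbabilityTheory
open scoped NNReal

lemma integral_sq_affine_gaussianReal (μ : ℝ) (v : ℝ≥0) (a c : ℝ) :
    ∫ y, (a * (y - μ) + c) ^ 2 ∂gaussianReal μ v = a ^ 2 * v + c ^ 2 := by
  have hid : Integrable (fun y => y) (gaussianReal μ v) :=
    (memLp_id_gaussianReal 1).integrable le_rfl
  have hint : Integrable (fun y => y - μ) (gaussianReal μ v) := hid.sub (integrable_const μ)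
  have hint2 : Integrable (fun y => (y - μ) ^ 2) (gaussianReal μ v) :=
    ((memLp_id_gaussianReal 2).sub (memLp_const μ)).integrable_sq
  have hmean : ∫ y, (y - μ) ∂gaussianReal μ v = 0 := by
    simp [integral_sub hid (integrable_const μ), integral_id_gaussianReal]
  have hvar : ∫ y, (y - μ) ^ 2 ∂gaussianReal μ v = v := by
    rw [← variance_fun_id_gaussianReal (μ := μ) (v := v), variance_eq_integral aemeasurable_id',
      integral_id_gaussianReal]
  have hexp : (fun y => (a * (y - μ) + c) ^ 2) =
      fun y => a ^ 2 * (y - μ) ^ 2 + (2 * a * c * (y - μ) + c ^ 2) := by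
    funext y; ring
  rw [hexp, integral_add (hint2.const_mul _) ((hint.const_mul _).fun_add (integrable_const _)),
    integral_add (hint.const_mul _) (integrable_const _), integral_const_mul, integral_const_mul,
    hmean, hvar]
  simp

lemma normalPDF_eq_gaussianPDFReal (m : ℝ) {v : ℝ} (hv : 0 ≤ v) :
    normalPDF m v = gaussianPDFReal m v.toNNReal := by
  rw [gaussianPDFReal_def, Real.coe_toNNReal v hv]
  rfl

lemma integral_mul_normalPDF (f : ℝ → ℝ) (m : ℝ) {v : ℝ} (hv : 0 < v) :
    ∫ y, f y * normalPDF m v y = ∫ y, f y ∂gaussianReal m v.toNNReal := by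
  rw [integral_gaussianReal_eq_integral_smul (by simpa using hv),
    normalPDF_eq_gaussianPDFReal m hv.le]
  simp only [smul_eq_mul, mul_comm]

lemma deriv_log_normalPDF (m : ℝ) {v : ℝ} (hv : 0 < v) (y : ℝ) :
    deriv (fun w => Real.log (normalPDF m v w)) y = (m - y) / v := by
  have hlog : (fun w => Real.log (normalPDF m v w)) =
      fun w => Real.log (Real.sqrt (2 * π * v))⁻¹ + -(w - m) ^ 2 / (2 * v) := by
    funext w
    rw [normalPDF, Real.log_mul (by positivity) (Real.exp_ne_zero _), Real.log_exp]
  have hderiv : HasDerivAt (fun w => -(w - m) ^ 2 / (2 * v)) (-(2 * (y - m)) / (2 * v)) y := by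
    simpa using (((hasDerivAt_id y).sub_const m).fun_pow 2).fun_neg.div_const (2 * v)
  rw [hlog, (hderiv.const_add _).deriv]
  field_simp
  ring

lemma relFisher_normalPDF (μ m : ℝ) {v w : ℝ} (hv : 0 < v) (hw : 0 < w) :
    relFisher (normalPDF μ v) (normalPDF m w) = (w⁻¹ - v⁻¹) ^ 2 * v + ((μ - m) / w) ^ 2 := by
  have hscore : ∀ y, deriv (fun x => Real.log (normalPDF μ v x)) y
      - deriv (fun x => Real.log (normalPDF m w x)) y = (w⁻¹ - v⁻¹) * (y - μ) + (μ - m) / w := by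
    intro y
    rw [deriv_log_normalPDF μ hv, deriv_log_normalPDF m hw]
    field_simp
    ring
  simp only [relFisher, hscore]
  rw [integral_mul_normalPDF _ μ hv, integral_sq_affine_gaussianReal, Real.coe_toNNReal v hv.le]

lemma BH_nonneg (v : ℝ) : 0 ≤ BH v := by
  unfold BH
  positivity

lemma sq_BH {v : ℝ} (hv : v < 2) : BH v ^ 2 = (v - 1) ^ 2 / (2 - v) := by
  rw [BH, div_pow, sq_abs, Real.sq_sqrt (by linarith)]

lemma cmp_eq_cmp_of_sub_eq_mul {x y a b k : ℝ} (hk : 0 < k) (h : x - y = k * (a - b)) :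
    cmp x y = cmp a b := by
  rw [← cmp_sub_zero, h, ← mul_zero k, cmp_mul_pos_left hk, cmp_sub_zero]

/-- For `p⋆ = N(μ,σ²)` with `σ² ∈ (0,2)`, `p₁ = N(μ,1)`, `p₂ = N(0,μ²+σ²)`, the relative
Fisher divergences compare according to the boundary `B_H`. -/
theorem relFisher_boundary (μ v : ℝ) (hv0 : 0 < v) (hv2 : v < 2) :
    (relFisher (normalPDF μ v) (normalPDF 0 (μ ^ 2 + v)) =
        relFisher (normalPDF μ v) (normalPDF μ 1) ↔ |μ| = BH v) ∧
      (relFisher (normalPDF μ v) (normalPDF 0 (μ ^ 2 + v)) >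
        relFisher (normalPDF μ v) (normalPDF μ 1) ↔ |μ| > BH v) ∧
      (relFisher (normalPDF μ v) (normalPDF 0 (μ ^ 2 + v)) <
        relFisher (normalPDF μ v) (normalPDF μ 1) ↔ |μ| < BH v) := by
  have hs : 0 < μ ^ 2 + v := by positivity
  have h2v : 0 < 2 - v := by linarith
  have hdiff : relFisher (normalPDF μ v) (normalPDF 0 (μ ^ 2 + v))
      - relFisher (normalPDF μ v) (normalPDF μ 1)
      = (2 - v) / (μ ^ 2 + v) * (|μ| ^ 2 - BH v ^ 2) := by
    rw [relFisher_normalPDF μ 0 hv0 hs, relFisher_normalPDF μ μ hv0 one_pos, sq_abs, sq_BH hv2]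
    field_simp
    ring
  have hcmp : cmp (relFisher (normalPDF μ v) (normalPDF 0 (μ ^ 2 + v)))
      (relFisher (normalPDF μ v) (normalPDF μ 1)) = cmp |μ| (BH v) := by
    rw [cmp_eq_cmp_of_sub_eq_mul (by positivity) hdiff,
      (pow_left_strictMonoOn₀ two_ne_zero).cmp_map_eq (abs_nonneg μ) (BH_nonneg v)]
  exact ⟨eq_iff_eq_of_cmp_eq_cmp hcmp, lt_iff_lt_of_cmp_eq_cmp (cmp_eq_cmp_symm.mp hcmp),
    lt_iff_lt_of_cmp_eq_cmp hcmp⟩
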